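/- Let V be a quadratic or bilinear R-module with unique base. Then every isometry σ ∈ O(V) satisfies σ(V_λ) = V_λ for each type λ, and the restriction maps give a group isomorphism O(V) ≅ Π_{λ∈Λ'} O(V_λ). -/

import Mathlib

universe u

/-- `B` is a base of the `R`-module `V`. -/
def IsBaseSet (R : Type*) [CommSemiring R] {V : Type*} [AddCommMonoid V] [Module R V]
    (B : Set V) : Prop :=
  ∀ x : V, ∃! c : B →₀ R, x = c.sum fun b r => r • (b : V)

/-- `V` is the internal direct sum of the family of submodules `W i`. -/
def IsInternalSum {R : Type*} [CommSemiring R] {V : Type*} [AddCommMonoid V] [Module R V]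
    {ι : Type*} (W : ι → Submodule R V) : Prop :=
  ∀ x : V, ∃! c : ι →₀ V, (∀ i, c i ∈ W i) ∧ x = c.sum fun _ v => v

/-- A quadratic `R`-module datum: a carrier with a quadratic form and a chosen base. -/
structure QMod (R : Type u) [CommSemiring R] where
  carrier : Type u
  [acm : AddCommMonoid carrier]
  [mod : Module R carrier]
  q : carrier → R
  base : Set carrier

attribute [instance] QMod.acm QMod.mod

namespace QMod
variable {R : Type u} [CommSemiring R]

/-- quasilinearity of the form of `M` on `S × T`. -/
def Qlin (M : QMod R) (S T : Set M.carrier) : Prop :=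
  ∀ x ∈ S, ∀ y ∈ T, M.q (x + y) = M.q x + M.q y

/-- `M` is a quadratic module (its form admits a symmetric bilinear companion) whose
chosen base is a base, and `M` has unique base. -/
def Good (M : QMod R) : Prop :=
  (∀ (a : R) (x : M.carrier), M.q (a • x) = a * a * M.q x) ∧
  (∃ b : M.carrier →ₗ[R] M.carrier →ₗ[R] R,
      (∀ x y, b x y = b y x) ∧ ∀ x y, M.q (x + y) = M.q x + M.q y + b x y) ∧
  IsBaseSet R M.base ∧
  (∀ B' : Set M.carrier, IsBaseSet R B' →
    ∀ v ∈ B', ∃ u : Rˣ, ∃ w ∈ M.base, v = (u : R) • w)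

/-- `W₁` is disjointly orthogonal to `W₂` in `M`. -/
def DisjOrth (M : QMod R) (W₁ W₂ : Submodule R M.carrier) : Prop :=
  W₁ ⊓ W₂ = ⊥ ∧ M.Qlin (W₁ : Set M.carrier) (W₂ : Set M.carrier)

/-- Two distinct base vectors are joined by an edge iff `q` is not quasilinear on the
pair of lines they span (equivalently, any quasiminimal companion is nonzero on them). -/
def edge (M : QMod R) (x y : M.carrier) : Prop :=
  x ∈ M.base ∧ y ∈ M.base ∧ x ≠ y ∧
    ¬ M.Qlin (Submodule.span R {x} : Submodule R M.carrier)
        (Submodule.span R {y} : Submodule R M.carrier)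

/-- The equivalence class of the base vector `x` under chains of edges. -/
def comp (M : QMod R) (x : M.carrier) : Set M.carrier :=
  {y ∈ M.base | x = y ∨ Relation.TransGen M.edge x y}

/-- The bases of the indecomposable components of `M`. -/
def comps (M : QMod R) : Set (Set M.carrier) := {C | ∃ x ∈ M.base, C = M.comp x}

/-- Isometry of quadratic modules. -/
def Isom (M N : QMod R) : Prop :=
  ∃ e : M.carrier ≃ₗ[R] N.carrier, ∀ x, N.q (e x) = M.q x

/-- `M` is indecomposable: no nontrivial disjoint orthogonal decomposition into
basic submodules. -/
def Indecomp (M : QMod R) : Prop :=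
  ¬ ∃ S₁ S₂ : Set M.carrier, S₁ ∪ S₂ = M.base ∧ Disjoint S₁ S₂ ∧ S₁.Nonempty ∧ S₂.Nonempty ∧
      M.DisjOrth (Submodule.span R S₁) (Submodule.span R S₂)

/-- The quadratic module carried by the basic submodule spanned by `C`. -/
def restrict (M : QMod R) (C : Set M.carrier) : QMod R where
  carrier := ↥(Submodule.span R C)
  q := fun x => M.q (x : M.carrier)
  base := {v : ↥(Submodule.span R C) | (v : M.carrier) ∈ C}

/-- The number (a cardinal) of indecomposable components of `M` isometric to `N`. -/
noncomputable def mult (M N : QMod R) : Cardinal :=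
  Cardinal.mk {C : Set M.carrier // C ∈ M.comps ∧ (M.restrict C).Isom N}

/-- External orthogonal sum `M ⊥ N` of two quadratic modules. -/
def orthSum (M N : QMod R) : QMod R where
  carrier := M.carrier × N.carrier
  q := fun p => M.q p.1 + N.q p.2
  base := (fun x => (x, (0 : N.carrier))) '' M.base ∪
    (fun y => ((0 : M.carrier), y)) '' N.base

/-- External orthogonal sum of `I`-many copies of `M`. -/
noncomputable def pow (M : QMod R) (I : Type u) : QMod R where
  carrier := I →₀ M.carrier
  q := fun f => f.sum fun _ x => M.q x
  base := {f | ∃ i, ∃ v ∈ M.base, f = Finsupp.single i v}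

end QMod

/-- A bilinear `R`-module datum: a carrier with a symmetric bilinear form and a base. -/
structure BMod (R : Type u) [CommSemiring R] where
  carrier : Type u
  [acm : AddCommMonoid carrier]
  [mod : Module R carrier]
  b : carrier → carrier → R
  base : Set carrier

attribute [instance] BMod.acm BMod.mod

namespace BMod
variable {R : Type u} [CommSemiring R]

/-- `M` is a bilinear module (`b` symmetric bilinear) whose chosen base is a base,
and `M` has unique base. -/
def Good (M : BMod R) : Prop :=
  (∀ x y, M.b x y = M.b y x) ∧
  (∀ x y z, M.b (x + y) z = M.b x z + M.b y z) ∧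
  (∀ (a : R) (x y : M.carrier), M.b (a • x) y = a * M.b x y) ∧
  IsBaseSet R M.base ∧
  (∀ B' : Set M.carrier, IsBaseSet R B' →
    ∀ v ∈ B', ∃ u : Rˣ, ∃ w ∈ M.base, v = (u : R) • w)

/-- `W₁` is disjointly orthogonal to `W₂` in `M`. -/
def DisjOrth (M : BMod R) (W₁ W₂ : Submodule R M.carrier) : Prop :=
  W₁ ⊓ W₂ = ⊥ ∧ ∀ x ∈ W₁, ∀ y ∈ W₂, M.b x y = 0

/-- Edges between distinct base vectors: nonzero `b_alt`-value. -/
def edge (M : BMod R) (x y : M.carrier) : Prop :=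
  x ∈ M.base ∧ y ∈ M.base ∧ x ≠ y ∧ M.b x y ≠ 0

/-- The equivalence class of the base vector `x` under chains of edges. -/
def comp (M : BMod R) (x : M.carrier) : Set M.carrier :=
  {y ∈ M.base | x = y ∨ Relation.TransGen M.edge x y}

/-- The bases of the indecomposable components of `M`. -/
def comps (M : BMod R) : Set (Set M.carrier) := {C | ∃ x ∈ M.base, C = M.comp x}

/-- Isometry of bilinear modules. -/
def Isom (M N : BMod R) : Prop :=
  ∃ e : M.carrier ≃ₗ[R] N.carrier, ∀ x y, N.b (e x) (e y) = M.b x y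

/-- `M` is indecomposable. -/
def Indecomp (M : BMod R) : Prop :=
  ¬ ∃ S₁ S₂ : Set M.carrier, S₁ ∪ S₂ = M.base ∧ Disjoint S₁ S₂ ∧ S₁.Nonempty ∧ S₂.Nonempty ∧
      M.DisjOrth (Submodule.span R S₁) (Submodule.span R S₂)

/-- The bilinear module carried by the basic submodule spanned by `C`. -/
def restrict (M : BMod R) (C : Set M.carrier) : BMod R where
  carrier := ↥(Submodule.span R C)
  b := fun x y => M.b (x : M.carrier) (y : M.carrier)
  base := {v : ↥(Submodule.span R C) | (v : M.carrier) ∈ C}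

/-- The number of indecomposable components of `M` isometric to `N`. -/
noncomputable def mult (M N : BMod R) : Cardinal :=
  Cardinal.mk {C : Set M.carrier // C ∈ M.comps ∧ (M.restrict C).Isom N}

/-- External orthogonal sum `M ⊥ N`. -/
def orthSum (M N : BMod R) : BMod R where
  carrier := M.carrier × N.carrier
  b := fun p p' => M.b p.1 p'.1 + N.b p.2 p'.2
  base := (fun x => (x, (0 : N.carrier))) '' M.base ∪
    (fun y => ((0 : M.carrier), y)) '' N.base

/-- External orthogonal sum of `I`-many copies of `M`. -/
noncomputable def pow (M : BMod R) (I : Type u) : BMod R where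
  carrier := I →₀ M.carrier
  b := fun f g => f.sum fun i x => M.b x (g i)
  base := {f | ∃ i, ∃ v ∈ M.base, f = Finsupp.single i v}

end BMod

namespace QMod
variable {R : Type u} [CommSemiring R]

/-- The orthogonal group of a quadratic module: all automorphisms preserving `q`. -/
def orthGroup (M : QMod R) : Subgroup (M.carrier ≃ₗ[R] M.carrier) where
  carrier := {e | ∀ x, M.q (e x) = M.q x}
  one_mem' := fun _ => rfl
  mul_mem' := by
    intro a b ha hb x
    have h : (a * b) x = a (b x) := rfl
    rw [h, ha, hb]
  inv_mem' := by
    intro a ha x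
    exact (ha ((a⁻¹ : _) x)).symm.trans (congrArg M.q (a.apply_symm_apply x))

/-- The quadratic module carried by a submodule `W`, with base the base vectors in `W`. -/
@[reducible] def restrictSub (M : QMod R) (W : Submodule R M.carrier) : QMod R where
  carrier := ↥W
  q := fun x => M.q (x : M.carrier)
  base := {v : ↥W | (v : M.carrier) ∈ M.base}

end QMod

namespace BMod
variable {R : Type u} [CommSemiring R]

/-- The orthogonal group of a bilinear module: all automorphisms preserving `b`. -/
def orthGroup (M : BMod R) : Subgroup (M.carrier ≃ₗ[R] M.carrier) where
  carrier := {e | ∀ x y, M.b (e x) (e y) = M.b x y}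
  one_mem' := fun _ _ => rfl
  mul_mem' := by
    intro a b ha hb x y
    have hx : (a * b) x = a (b x) := rfl
    have hy : (a * b) y = a (b y) := rfl
    rw [hx, hy, ha, hb]
  inv_mem' := by
    intro a ha x y
    have h := ha ((a⁻¹ : _) x) ((a⁻¹ : _) y)
    refine h.symm.trans ?_
    rw [show a ((a⁻¹ : _) x) = x from a.apply_symm_apply x,
      show a ((a⁻¹ : _) y) = y from a.apply_symm_apply y]

/-- The bilinear module carried by a submodule `W`, with base the base vectors in `W`. -/
@[reducible] def restrictSub (M : BMod R) (W : Submodule R M.carrier) : BMod R where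
  carrier := ↥W
  b := fun x y => M.b (x : M.carrier) (y : M.carrier)
  base := {v : ↥W | (v : M.carrier) ∈ M.base}

end BMod

/-!
Since the base is unique, an isometry `σ` sends every base vector to a unit multiple of a base
vector. It preserves the relation "`q` is not quasilinear on the two lines" (resp.
"`b` does not vanish on the pair"), which is insensitive to units, so it maps edges to edges and
hence the span of each connected component onto the span of another component, isometric to it.
Therefore `σ` preserves every isotypical component `V_λ`.

Sorting the base vectors by the type of their component partitions the base, so `V` is the
direct sum of the `V_λ`; these are mutually orthogonal because no edge joins base vectors of
different types. An automorphism preserving every `V_λ` is then an isometry exactly when all its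
restrictions are, and gluing isometries of the `V_λ` along the base gives the inverse of the
restriction map `O(V) → Π O(V_λ)`.
-/

open Module Submodule

section BaseSet

variable {R V : Type*} [CommSemiring R] [AddCommMonoid V] [Module R V] {B : Set V}

theorem isBaseSet_iff_bijective :
    IsBaseSet R B ↔ Function.Bijective (Finsupp.linearCombination R ((↑) : B → V)) := by
  simp only [IsBaseSet, Function.bijective_iff_existsUnique, Finsupp.linearCombination_apply,
    eq_comm]

noncomputable def IsBaseSet.basis (hB : IsBaseSet R B) : Basis B R V :=
  .ofRepr (LinearEquiv.ofBijective _ (isBaseSet_iff_bijective.1 hB)).symm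

@[simp]
theorem IsBaseSet.coe_basis (hB : IsBaseSet R B) : ⇑hB.basis = ((↑) : B → V) := by
  ext k
  simp [IsBaseSet.basis]

theorem isBaseSet_range {ι : Type*} (b : Basis ι R V) : IsBaseSet R (Set.range b) := by
  have hval : ((↑) : Set.range b → V) = b.reindexRange :=
    funext fun x => (b.reindexRange_apply x).symm
  rw [isBaseSet_iff_bijective, hval, ← b.reindexRange.coe_repr_symm]
  exact b.reindexRange.repr.symm.bijective

theorem IsBaseSet.image (hB : IsBaseSet R B) (σ : V ≃ₗ[R] V) : IsBaseSet R (σ '' B) := by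
  have h := isBaseSet_range (hB.basis.map σ)
  rwa [Basis.coe_map, hB.coe_basis, Set.range_comp, Subtype.range_coe] at h

theorem IsBaseSet.eq_of_eq_smul (hB : IsBaseSet R B) {x y : V} (hx : x ∈ B) (hy : y ∈ B)
    {a : R} (h : y = a • x) : y = x := by
  by_contra hne
  have hrepr := congrArg (fun v => hB.basis.repr v ⟨y, hy⟩) h
  have hxy : (⟨x, hx⟩ : B) ≠ ⟨y, hy⟩ := fun h' => hne (congrArg Subtype.val h').symm
  have hry : hB.basis.repr y = Finsupp.single ⟨y, hy⟩ 1 := by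
    simpa using hB.basis.repr_self ⟨y, hy⟩
  have hrx : hB.basis.repr x = Finsupp.single ⟨x, hx⟩ 1 := by
    simpa using hB.basis.repr_self ⟨x, hx⟩
  simp only [map_smul, hry, hrx, Finsupp.single_eq_same, Finsupp.smul_apply,
    Finsupp.single_eq_of_ne hxy.symm, smul_zero] at hrepr
  have : Subsingleton R := subsingleton_of_zero_eq_one hrepr.symm
  exact hne (Subsingleton.elim (h := Module.subsingleton R V) _ _)

end BaseSet

section UniqueBase

variable (R : Type*) {V : Type*} [CommSemiring R] [AddCommMonoid V] [Module R V]

def IsUniqueBase (B : Set V) : Prop :=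
  IsBaseSet R B ∧ ∀ B' : Set V, IsBaseSet R B' → ∀ v ∈ B', ∃ u : Rˣ, ∃ w ∈ B, v = (u : R) • w

variable {R}

theorem IsUniqueBase.exists_unit_smul {B : Set V} (hB : IsUniqueBase R B) (σ : V ≃ₗ[R] V)
    {x : V} (hx : x ∈ B) : ∃ u : Rˣ, ∃ w ∈ B, σ x = (u : R) • w :=
  hB.2 _ (hB.1.image σ) _ ⟨x, hx, rfl⟩

end UniqueBase

section Components

variable {V : Type*} (B : Set V) (L : V → V → Prop)

def baseEdge (x y : V) : Prop := x ∈ B ∧ y ∈ B ∧ x ≠ y ∧ L x y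

def baseComponent (x : V) : Set V := {y ∈ B | x = y ∨ Relation.TransGen (baseEdge B L) x y}

def baseOfType (P : Set V → Prop) : Set V := {x ∈ B | P (baseComponent B L x)}

variable {B L}

theorem mem_baseComponent {x y : V} :
    y ∈ baseComponent B L x ↔ y ∈ B ∧ Relation.ReflTransGen (baseEdge B L) x y := by
  simp only [baseComponent, Set.mem_ofPred_eq, Relation.reflTransGen_iff_eq_or_transGen, eq_comm]

theorem mem_baseComponent_self {x : V} (hx : x ∈ B) : x ∈ baseComponent B L x :=
  mem_baseComponent.2 ⟨hx, .refl⟩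

theorem baseComponent_eq_of_mem (hL : ∀ x y, L x y → L y x) {x y : V}
    (hy : y ∈ baseComponent B L x) : baseComponent B L y = baseComponent B L x := by
  have : Std.Symm (baseEdge B L) := ⟨fun a b ⟨ha, hb, hab, h⟩ => ⟨hb, ha, hab.symm, hL a b h⟩⟩
  have hxy := (mem_baseComponent.1 hy).2
  ext z
  simp only [mem_baseComponent]
  exact and_congr_right fun _ => ⟨hxy.trans, (Std.Symm.symm _ _ hxy).trans⟩

theorem sUnion_baseComponents_eq_baseOfType (hL : ∀ x y, L x y → L y x) (P : Set V → Prop) :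
    ⋃₀ {C | (∃ x ∈ B, C = baseComponent B L x) ∧ P C} = baseOfType B L P := by
  ext y
  constructor
  · rintro ⟨_, ⟨⟨x, -, rfl⟩, hP⟩, hy⟩
    exact ⟨(mem_baseComponent.1 hy).1, baseComponent_eq_of_mem hL hy ▸ hP⟩
  · rintro ⟨hy, hP⟩
    exact ⟨_, ⟨⟨y, hy, rfl⟩, hP⟩, mem_baseComponent_self hy⟩

theorem not_rel_of_mem_baseOfType (hL : ∀ x y, L x y → L y x) {P Q : Set V → Prop}
    (hPQ : ∀ C, P C → ¬ Q C) {e f : V} (he : e ∈ baseOfType B L P) (hf : f ∈ baseOfType B L Q) :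
    ¬ L e f := by
  intro hef
  have hne : e ≠ f := by
    rintro rfl
    exact hPQ _ he.2 hf.2
  have hfe : f ∈ baseComponent B L e :=
    mem_baseComponent.2 ⟨hf.1, .single ⟨he.1, hf.1, hne, hef⟩⟩
  exact hPQ _ (baseComponent_eq_of_mem hL hfe ▸ he.2) hf.2

end Components

theorem Submodule.map_equiv_eq_of_le {R V : Type*} [Semiring R] [AddCommMonoid V] [Module R V]
    {p q : Submodule R V} (σ : V ≃ₗ[R] V) (h₁ : p.map σ.toLinearMap ≤ q)
    (h₂ : q.map σ.symm.toLinearMap ≤ p) : p.map σ.toLinearMap = q := by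
  refine le_antisymm h₁ ?_
  rwa [map_equiv_eq_comap_symm, ← map_le_iff_le_comap]

section Transport

variable {R V : Type*} [CommSemiring R] [AddCommMonoid V] [Module R V] {B : Set V}
  {L : V → V → Prop} {G : Subgroup (V ≃ₗ[R] V)} {σ : V ≃ₗ[R] V}

structure IsInvariantLineRel (G : Subgroup (V ≃ₗ[R] V)) (L : V → V → Prop) : Prop where
  symm : ∀ x y, L x y → L y x
  of_units_smul : ∀ (u u' : Rˣ) x y, L ((u : R) • x) ((u' : R) • y) → L x y
  map : ∀ σ ∈ G, ∀ x y, L x y → L (σ x) (σ y)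

theorem baseEdge_of_map (hB : IsBaseSet R B) (hL : IsInvariantLineRel G L) (hσ : σ ∈ G)
    {x y w w' : V} {u u' : Rˣ} (hxy : baseEdge B L x y) (hw : w ∈ B) (hw' : w' ∈ B)
    (hx : σ x = (u : R) • w) (hy : σ y = (u' : R) • w') : baseEdge B L w w' := by
  refine ⟨hw, hw', ?_, hL.of_units_smul u u' w w' (hx ▸ hy ▸ hL.map σ hσ x y hxy.2.2.2)⟩
  rintro rfl
  refine hxy.2.2.1 (hB.eq_of_eq_smul hxy.1 hxy.2.1 (a := (u' : R) * ((u⁻¹ : Rˣ) : R)) ?_).symm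
  apply σ.injective
  rw [map_smul, hx, hy, smul_smul, mul_assoc, Units.inv_mul, mul_one]

theorem exists_unit_smul_mem_baseComponent (hB : IsUniqueBase R B)
    (hL : IsInvariantLineRel G L) (hσ : σ ∈ G) {e w : V} {u : Rˣ} (hw : w ∈ B)
    (he : σ e = (u : R) • w) {y : V} (hy : Relation.ReflTransGen (baseEdge B L) e y) :
    ∃ u' : Rˣ, ∃ w' ∈ baseComponent B L w, σ y = (u' : R) • w' := by
  induction hy with
  | refl => exact ⟨u, w, mem_baseComponent_self hw, he⟩
  | tail _ hstep ih =>
    obtain ⟨u₁, w₁, hw₁, h₁⟩ := ih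
    obtain ⟨hw₁B, hchain⟩ := mem_baseComponent.1 hw₁
    obtain ⟨u₂, w₂, hw₂, h₂⟩ := hB.exists_unit_smul σ hstep.2.1
    have hedge := baseEdge_of_map hB.1 hL hσ hstep hw₁B hw₂ h₁ h₂
    exact ⟨u₂, w₂, mem_baseComponent.2 ⟨hw₂, hchain.tail hedge⟩, h₂⟩

theorem map_span_baseComponent (hB : IsUniqueBase R B) (hL : IsInvariantLineRel G L)
    (hσ : σ ∈ G) {e w : V} {u : Rˣ} (he : e ∈ B) (hw : w ∈ B) (h : σ e = (u : R) • w) :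
    (span R (baseComponent B L e)).map σ.toLinearMap = span R (baseComponent B L w) := by
  have key : ∀ τ ∈ G, ∀ (e w : V) (u : Rˣ), w ∈ B → τ e = (u : R) • w →
      (span R (baseComponent B L e)).map τ.toLinearMap ≤ span R (baseComponent B L w) := by
    intro τ hτ e w u hw h
    rw [map_span, span_le]
    rintro _ ⟨y, hy, rfl⟩
    obtain ⟨u', w', hw', hy'⟩ :=
      exists_unit_smul_mem_baseComponent hB hL hτ hw h (mem_baseComponent.1 hy).2
    rw [LinearEquiv.coe_toLinearMap, hy']
    exact smul_mem _ _ (subset_span hw')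
  refine map_equiv_eq_of_le σ (key σ hσ e w u hw h) (key σ⁻¹ (G.inv_mem hσ) w e u⁻¹ he ?_)
  rw [LinearEquiv.coe_inv, σ.symm_apply_eq, map_smul, h, smul_smul, Units.inv_mul, one_smul]

theorem map_span_baseOfType (hB : IsUniqueBase R B) (hL : IsInvariantLineRel G L)
    {P : Set V → Prop}
    (hP : ∀ σ ∈ G, ∀ C C', (span R C).map σ.toLinearMap = span R C' → P C → P C')
    (hσ : σ ∈ G) :
    (span R (baseOfType B L P)).map σ.toLinearMap = span R (baseOfType B L P) := by
  have key : ∀ τ ∈ G,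
      (span R (baseOfType B L P)).map τ.toLinearMap ≤ span R (baseOfType B L P) := by
    intro τ hτ
    rw [map_span, span_le]
    rintro _ ⟨e, ⟨he, hPe⟩, rfl⟩
    obtain ⟨u, w, hw, h⟩ := hB.exists_unit_smul τ he
    have hPw := hP τ hτ _ _ (map_span_baseComponent hB hL hτ he hw h) hPe
    rw [LinearEquiv.coe_toLinearMap, h]
    exact smul_mem _ _ (subset_span ⟨hw, hPw⟩)
  exact map_equiv_eq_of_le σ (key σ hσ) (key σ⁻¹ (G.inv_mem hσ))

end Transport

section Restriction

variable {R V ι : Type*} [CommSemiring R] [AddCommMonoid V] [Module R V]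
  {W : ι → Submodule R V}

theorem exists_mulEquiv_pi_restrict (G : Subgroup (V ≃ₗ[R] V))
    (H : ∀ i, Subgroup (W i ≃ₗ[R] W i)) (hcov : ⨆ i, W i = ⊤)
    (hmap : ∀ σ ∈ G, ∀ i, (W i).map σ.toLinearMap = W i)
    (hres : ∀ σ ∈ G, ∀ i (τ : W i ≃ₗ[R] W i), (∀ x, (τ x : V) = σ x) → τ ∈ H i)
    (hext : ∀ τ : (i : ι) → H i,
      ∃ σ ∈ G, ∀ i (x : W i), σ x = ((τ i : W i ≃ₗ[R] W i) x : V)) :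
    ∃ φ : G ≃* ((i : {i // W i ≠ ⊥}) → H i),
      ∀ (σ : G) (i : {i // W i ≠ ⊥}) (x : W i),
        ((φ σ i : W i ≃ₗ[R] W i) x : V) = (σ : V ≃ₗ[R] V) x := by
  classical
  let Φ : G →* ((i : {i // W i ≠ ⊥}) → H i) :=
    { toFun := fun σ i => ⟨σ.1.ofSubmodules _ _ (hmap σ σ.2 i), hres σ σ.2 i _ fun _ => rfl⟩
      map_one' := funext fun _ => Subtype.ext (LinearEquiv.ext fun _ => rfl)
      map_mul' := fun _ _ => funext fun _ => Subtype.ext (LinearEquiv.ext fun _ => rfl) }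
  have hΦ : Function.Injective Φ := by
    intro σ τ h
    refine Subtype.ext (LinearEquiv.ext fun x => ?_)
    refine iSup_induction W (motive := fun x => σ.1 x = τ.1 x) (hcov ▸ mem_top) ?_
      (by simp only [map_zero]) fun x y hx hy => by simp only [map_add, hx, hy]
    intro i x hx
    by_cases hi : W i = ⊥
    · rw [(mem_bot R (x := x)).1 (hi ▸ hx), map_zero, map_zero]
    · exact congrArg Subtype.val
        (LinearEquiv.congr_fun (congrArg Subtype.val (congrFun h ⟨i, hi⟩)) ⟨x, hx⟩)
  have hΦ' : Function.Surjective Φ := by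
    intro τ
    obtain ⟨σ, hσ, hστ⟩ := hext fun i => if h : W i = ⊥ then 1 else τ ⟨i, h⟩
    refine ⟨⟨σ, hσ⟩, funext fun i => Subtype.ext (LinearEquiv.ext fun x => Subtype.ext ?_)⟩
    exact (hστ i x).trans (by rw [dif_neg i.2])
  exact ⟨MulEquiv.ofBijective Φ ⟨hΦ, hΦ'⟩, fun _ _ _ => rfl⟩

end Restriction

theorem Submodule.span_preimage_subtype_eq_top {R V : Type*} [Semiring R] [AddCommMonoid V]
    [Module R V] {p : Submodule R V} {s : Set V} (h : p = span R s) :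
    span R (((↑) : p → V) ⁻¹' s) = ⊤ := by
  subst h
  exact span_span_coe_preimage

namespace Module.Basis

variable {R V ι κ : Type*} [CommSemiring R] [AddCommMonoid V] [Module R V]
  (b : Basis κ R V) {t : κ → ι} {W : ι → Submodule R V}

theorem iSup_eq_top_of_partition (hW : ∀ i, W i = span R (b '' (t ⁻¹' {i}))) :
    ⨆ i, W i = ⊤ := by
  rw [eq_top_iff, ← b.span_eq, span_le]
  rintro _ ⟨k, rfl⟩
  exact mem_iSup_of_mem (t k) (hW (t k) ▸ subset_span ⟨k, rfl, rfl⟩)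

theorem exists_linearEquiv_restrict_eq (hW : ∀ i, W i = span R (b '' (t ⁻¹' {i})))
    (τ : ∀ i, W i ≃ₗ[R] W i) : ∃ σ : V ≃ₗ[R] V, ∀ i (x : W i), σ x = τ i x := by
  have hmem : ∀ k, b k ∈ W (t k) := fun k => hW (t k) ▸ subset_span ⟨k, rfl, rfl⟩
  let glue (f : ∀ i, W i →ₗ[R] W i) : V →ₗ[R] V := b.constr ℕ fun k => f (t k) ⟨b k, hmem k⟩
  have hglue (f : ∀ i, W i →ₗ[R] W i) (i : ι) (x : W i) : glue f x = f i x := by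
    have : (glue f).comp (W i).subtype = (W i).subtype.comp (f i) := by
      refine LinearMap.ext_on (span_preimage_subtype_eq_top (hW i)) ?_
      rintro ⟨_, hx⟩ ⟨k, rfl, rfl⟩
      simp only [glue, LinearMap.comp_apply, Submodule.subtype_apply, b.constr_basis]
    exact LinearMap.congr_fun this x
  have hinv (f g : ∀ i, W i →ₗ[R] W i) (hfg : ∀ i, (f i).comp (g i) = .id) :
      (glue f).comp (glue g) = .id := by
    refine b.ext fun k => ?_
    rw [LinearMap.comp_apply, hglue g (t k) ⟨b k, hmem k⟩, hglue f, ← LinearMap.comp_apply,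
      hfg, LinearMap.id_apply, LinearMap.id_apply]
  let f i := (τ i).toLinearMap
  let g i := (τ i).symm.toLinearMap
  have hfg := hinv f g fun i => LinearMap.ext (τ i).apply_symm_apply
  have hgf := hinv g f fun i => LinearMap.ext (τ i).symm_apply_apply
  exact ⟨LinearEquiv.ofLinearMap (glue f) (glue g) hfg hgf, hglue f⟩

end Module.Basis

theorem IsBaseSet.exists_partition_baseOfType {R V Λ : Type*} [CommSemiring R] [AddCommMonoid V]
    [Module R V] {B : Set V} {L : V → V → Prop} (hB : IsBaseSet R B)
    {P : Λ → Set V → Prop} (hPuniq : ∀ l m C, P l C → P m C → l = m)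
    (htyped : ∀ x ∈ B, ∃ l, P l (baseComponent B L x)) :
    ∃ t : B → Λ, ∀ l, baseOfType B L (P l) = hB.basis '' (t ⁻¹' {l}) := by
  choose t ht using fun k : B => htyped k k.2
  refine ⟨t, fun l => ?_⟩
  ext x
  rw [hB.coe_basis]
  constructor
  · rintro ⟨hx, hP⟩
    exact ⟨⟨x, hx⟩, hPuniq _ _ _ (ht _) hP, rfl⟩
  · rintro ⟨k, rfl, rfl⟩
    exact ⟨k.2, ht k⟩

namespace QMod

variable {R : Type u} [CommSemiring R] {M N P : QMod R}

theorem Isom.symm (h : M.Isom N) : N.Isom M := by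
  obtain ⟨e, he⟩ := h
  exact ⟨e.symm, fun x => by rw [← he, e.apply_symm_apply]⟩

theorem Isom.trans (h₁ : M.Isom N) (h₂ : N.Isom P) : M.Isom P := by
  obtain ⟨e₁, he₁⟩ := h₁
  obtain ⟨e₂, he₂⟩ := h₂
  exact ⟨e₁.trans e₂, fun x => (he₂ _).trans (he₁ x)⟩

theorem isom_restrict_of_map {σ : M.carrier ≃ₗ[R] M.carrier} (hσ : σ ∈ M.orthGroup)
    {C C' : Set M.carrier} (h : (span R C).map σ.toLinearMap = span R C') :
    (M.restrict C).Isom (M.restrict C') :=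
  ⟨σ.ofSubmodules _ _ h, fun x => hσ x.1⟩

def IsOrtho (M : QMod R) (x y : M.carrier) : Prop := M.q (x + y) = M.q x + M.q y

theorem IsOrtho.symm {x y : M.carrier} (h : M.IsOrtho x y) : M.IsOrtho y x := by
  rw [IsOrtho, add_comm, h, add_comm]

theorem Qlin.symm {S T : Set M.carrier} (h : M.Qlin S T) : M.Qlin T S :=
  fun y hy x hx => IsOrtho.symm (h x hx y hy)

theorem qlin_span_singleton_map {σ : M.carrier ≃ₗ[R] M.carrier} (hσ : σ ∈ M.orthGroup)
    {x y : M.carrier} (h : M.Qlin (span R {x}) (span R {y})) :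
    M.Qlin (span R {σ x}) (span R {σ y}) := by
  intro _ hx' _ hy'
  obtain ⟨a, rfl⟩ := mem_span_singleton.1 hx'
  obtain ⟨c, rfl⟩ := mem_span_singleton.1 hy'
  rw [← map_smul, ← map_smul, ← map_add, hσ, hσ, hσ]
  exact h _ (smul_mem _ _ (mem_span_singleton_self x)) _ (smul_mem _ _ (mem_span_singleton_self y))

end QMod

namespace QMod.Good

variable {R : Type u} [CommSemiring R] {M : QMod R}

theorem q_zero (hG : M.Good) : M.q 0 = 0 := by
  simpa using hG.1 0 0

theorem isOrtho_zero_right (hG : M.Good) (x : M.carrier) : M.IsOrtho x 0 := by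
  rw [IsOrtho, add_zero, hG.q_zero, add_zero]

theorem isOrtho_add_left (hG : M.Good) {x₁ x₂ y : M.carrier} (h₁ : M.IsOrtho x₁ y)
    (h₂ : M.IsOrtho x₂ y) : M.IsOrtho (x₁ + x₂) y := by
  obtain ⟨β, -, hβ⟩ := hG.2.1
  unfold IsOrtho at h₁ h₂ ⊢
  rw [hβ] at h₁ h₂ ⊢
  rw [hβ x₁ x₂, map_add, LinearMap.add_apply]
  -- there is no cancellation: each cross term `β xᵢ y` is absorbed by `q xᵢ + q y`
  calc M.q x₁ + M.q x₂ + β x₁ x₂ + M.q y + (β x₁ y + β x₂ y)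
      = (M.q x₁ + M.q y + β x₁ y) + (M.q x₂ + β x₁ x₂ + β x₂ y) := by ring
    _ = (M.q x₂ + M.q y + β x₂ y) + (M.q x₁ + β x₁ x₂) := by rw [h₁]; ring
    _ = M.q x₁ + M.q x₂ + β x₁ x₂ + M.q y := by rw [h₂]; ring

theorem isOrtho_sum_right (hG : M.Good) {ι : Type*} (s : Finset ι) {x : M.carrier}
    {y : ι → M.carrier} (h : ∀ i ∈ s, M.IsOrtho x (y i)) : M.IsOrtho x (∑ i ∈ s, y i) :=
  Finset.sum_induction _ (M.IsOrtho x)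
    (fun _ _ ha hb => (hG.isOrtho_add_left ha.symm hb.symm).symm) (hG.isOrtho_zero_right x) h

theorem qlin_span (hG : M.Good) {S T : Set M.carrier}
    (h : ∀ e ∈ S, ∀ f ∈ T, M.Qlin (span R {e}) (span R {f})) :
    M.Qlin (span R S) (span R T) := by
  intro x hx y hy
  induction hx using closure_induction with
  | zero => exact IsOrtho.symm (hG.isOrtho_zero_right y)
  | add _ _ _ _ h₁ h₂ => exact hG.isOrtho_add_left h₁ h₂
  | smul_mem a e he =>
    induction hy using closure_induction with
    | zero => exact hG.isOrtho_zero_right _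
    | add _ _ _ _ h₁ h₂ => exact (hG.isOrtho_add_left (IsOrtho.symm h₁) (IsOrtho.symm h₂)).symm
    | smul_mem c f hf =>
      exact h e he f hf _ (smul_mem _ _ (mem_span_singleton_self e))
        _ (smul_mem _ _ (mem_span_singleton_self f))

variable {ι : Type*} {W : ι → Submodule R M.carrier}

theorem q_sum (hG : M.Good) (horth : ∀ i j, i ≠ j → M.Qlin (W i) (W j)) (s : Finset ι)
    {x : ι → M.carrier} (hx : ∀ i ∈ s, x i ∈ W i) :
    M.q (∑ i ∈ s, x i) = ∑ i ∈ s, M.q (x i) := by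
  classical
  induction s using Finset.induction_on with
  | empty => simpa using hG.q_zero
  | insert a s ha ih =>
    rw [Finset.sum_insert ha, Finset.sum_insert ha,
      ← ih fun i hi => hx i (Finset.mem_insert_of_mem hi)]
    refine hG.isOrtho_sum_right s fun i hi => horth a i (fun h => ha (h ▸ hi)) _ ?_ _ ?_
    · exact hx a (Finset.mem_insert_self a s)
    · exact hx i (Finset.mem_insert_of_mem hi)

theorem q_map_eq (hG : M.Good) (hcov : ⨆ i, W i = ⊤)
    (horth : ∀ i j, i ≠ j → M.Qlin (W i) (W j)) {σ : M.carrier →ₗ[R] M.carrier}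
    (hσW : ∀ i, ∀ x ∈ W i, σ x ∈ W i) (hσ : ∀ i, ∀ x ∈ W i, M.q (σ x) = M.q x)
    (x : M.carrier) : M.q (σ x) = M.q x := by
  obtain ⟨f, hf, rfl⟩ := (mem_iSup_iff_exists_finsupp W x).1 (hcov ▸ mem_top)
  rw [Finsupp.sum, map_sum, hG.q_sum horth _ fun i _ => hσW i _ (hf i),
    hG.q_sum horth _ fun i _ => hf i]
  exact Finset.sum_congr rfl fun i _ => hσ i _ (hf i)

end QMod.Good

namespace QMod

variable {R : Type u} [CommSemiring R]

theorem orthogonal_group_product (V : QMod R) (hG : V.Good) (Λ : Type u)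
    (rep : Λ → QMod R) (hrep : ∀ l m, (rep l).Isom (rep m) → l = m)
    (htyped : ∀ C ∈ V.comps, ∃ l, (V.restrict C).Isom (rep l))
    (Vl : Λ → Submodule R V.carrier)
    (hVl : ∀ l, Vl l =
      span R (⋃₀ {C | C ∈ V.comps ∧ (V.restrict C).Isom (rep l)})) :
    (∀ σ : V.carrier ≃ₗ[R] V.carrier, (∀ x, V.q (σ x) = V.q x) →
      ∀ l, (Vl l).map σ.toLinearMap = Vl l) ∧
    ∃ φ : V.orthGroup ≃* ((l : {l : Λ // Vl l ≠ ⊥}) → (V.restrictSub (Vl l.1)).orthGroup),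
      ∀ (σ : V.orthGroup) (l : {l : Λ // Vl l ≠ ⊥}) (x : V.carrier) (hx : x ∈ Vl l.1),
        (((φ σ l : (V.restrictSub (Vl l.1)).carrier ≃ₗ[R] (V.restrictSub (Vl l.1)).carrier)
          ⟨x, hx⟩ : V.carrier) = (σ : V.carrier ≃ₗ[R] V.carrier) x) := by
  -- `V.edge` unfolds to `baseEdge V.base L`, so `V.comps` are the components `baseComponent`
  let L (x y : V.carrier) : Prop := ¬ V.Qlin (span R {x}) (span R {y})
  let P (l : Λ) (C : Set V.carrier) : Prop := (V.restrict C).Isom (rep l)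
  have hL : IsInvariantLineRel V.orthGroup L := by
    refine ⟨fun _ _ h h' => h h'.symm, fun u u' x y h => ?_, fun σ hσ x y h h' => h ?_⟩
    · simpa only [L, span_singleton_smul_eq u.isUnit, span_singleton_smul_eq u'.isUnit] using h
    · simpa using qlin_span_singleton_map (V.orthGroup.inv_mem hσ) h'
  have hP : ∀ l, ∀ σ ∈ V.orthGroup, ∀ C C', (span R C).map σ.toLinearMap = span R C' →
      P l C → P l C' := fun l σ hσ C C' h hC => (isom_restrict_of_map hσ h).symm.trans hC
  have hPuniq : ∀ l m C, P l C → P m C → l = m := fun l m C hl hm => hrep l m (hl.symm.trans hm)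
  have hB : IsUniqueBase R V.base := hG.2.2
  have hVl' (l : Λ) : Vl l = span R (baseOfType V.base L (P l)) :=
    (hVl l).trans (congrArg _ (sUnion_baseComponents_eq_baseOfType hL.symm _))
  have hmap : ∀ σ ∈ V.orthGroup, ∀ l, (Vl l).map σ.toLinearMap = Vl l := fun σ hσ l => by
    rw [hVl']
    exact map_span_baseOfType hB hL (hP l) hσ
  refine ⟨fun σ hσ => hmap σ hσ, ?_⟩
  obtain ⟨t, ht⟩ := hB.1.exists_partition_baseOfType hPuniq fun x hx => htyped _ ⟨x, hx, rfl⟩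
  have hW (l : Λ) : Vl l = span R (hB.1.basis '' (t ⁻¹' {l})) := by rw [hVl', ht]
  have hcov := hB.1.basis.iSup_eq_top_of_partition hW
  have horth (l m : Λ) (hlm : l ≠ m) : V.Qlin (Vl l) (Vl m) := by
    rw [hVl', hVl']
    refine hG.qlin_span fun e he f hf => not_not.1 ?_
    exact not_rel_of_mem_baseOfType hL.symm (fun C hl hm => hlm (hPuniq _ _ _ hl hm)) he hf
  obtain ⟨φ, hφ⟩ := exists_mulEquiv_pi_restrict V.orthGroup
    (fun l => (V.restrictSub (Vl l)).orthGroup) hcov hmap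
    (fun σ hσ l τ hτ x => (congrArg V.q (hτ x)).trans (hσ x)) fun τ => by
      obtain ⟨σ, hσ⟩ := hB.1.basis.exists_linearEquiv_restrict_eq hW fun l => (τ l).1
      refine ⟨σ, hG.q_map_eq hcov horth (fun l x hx => ?_) (fun l x hx => ?_), hσ⟩
      · exact hσ l ⟨x, hx⟩ ▸ ((τ l).1 ⟨x, hx⟩).2
      · exact (congrArg V.q (hσ l ⟨x, hx⟩)).trans ((τ l).2 ⟨x, hx⟩)
  exact ⟨φ, fun σ l x hx => hφ σ l ⟨x, hx⟩⟩

end QMod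

namespace BMod

variable {R : Type u} [CommSemiring R] {M N P : BMod R}

theorem Isom.symm (h : M.Isom N) : N.Isom M := by
  obtain ⟨e, he⟩ := h
  exact ⟨e.symm, fun x y => by rw [← he, e.apply_symm_apply, e.apply_symm_apply]⟩

theorem Isom.trans (h₁ : M.Isom N) (h₂ : N.Isom P) : M.Isom P := by
  obtain ⟨e₁, he₁⟩ := h₁
  obtain ⟨e₂, he₂⟩ := h₂
  exact ⟨e₁.trans e₂, fun x y => (he₂ _ _).trans (he₁ x y)⟩

theorem isom_restrict_of_map {σ : M.carrier ≃ₗ[R] M.carrier} (hσ : σ ∈ M.orthGroup)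
    {C C' : Set M.carrier} (h : (span R C).map σ.toLinearMap = span R C') :
    (M.restrict C).Isom (M.restrict C') :=
  ⟨σ.ofSubmodules _ _ h, fun x y => hσ x.1 y.1⟩

namespace Good

def toBilin (hG : M.Good) : LinearMap.BilinForm R M.carrier :=
  LinearMap.mk₂ R M.b hG.2.1 (fun c x y => hG.2.2.1 c x y)
    (fun x y z => by rw [hG.1, hG.2.1, hG.1 y, hG.1 z])
    (fun c x y => by rw [hG.1, hG.2.2.1, hG.1 y, smul_eq_mul])

theorem toBilin_apply (hG : M.Good) (x y : M.carrier) : hG.toBilin x y = M.b x y := rfl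

theorem b_eq_zero_of_mem_span (hG : M.Good) {S T : Set M.carrier}
    (h : ∀ e ∈ S, ∀ f ∈ T, M.b e f = 0) {x y : M.carrier} (hx : x ∈ span R S)
    (hy : y ∈ span R T) : M.b x y = 0 := by
  have h' : ∀ e ∈ S, hG.toBilin e y = 0 := fun e he =>
    LinearMap.eqOn_span' (f := hG.toBilin e) (g := 0) (fun f hf => h e he f hf) hy
  exact LinearMap.eqOn_span' (f := hG.toBilin.flip y) (g := 0) h' hx

theorem b_map_eq (hG : M.Good) {ι : Type*} {W : ι → Submodule R M.carrier}
    (hcov : ⨆ i, W i = ⊤) (horth : ∀ i j, i ≠ j → ∀ x ∈ W i, ∀ y ∈ W j, M.b x y = 0)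
    {σ : M.carrier →ₗ[R] M.carrier} (hσW : ∀ i, ∀ x ∈ W i, σ x ∈ W i)
    (hσ : ∀ i, ∀ x ∈ W i, ∀ y ∈ W i, M.b (σ x) (σ y) = M.b x y) (x y : M.carrier) :
    M.b (σ x) (σ y) = M.b x y := by
  have hspan : span R (⋃ i, (W i : Set M.carrier)) = ⊤ := by rw [← iSup_eq_span, hcov]
  have key : hG.toBilin.compl₁₂ σ σ = hG.toBilin := by
    refine LinearMap.ext_on hspan fun x hx => LinearMap.ext_on hspan fun y hy => ?_
    obtain ⟨i, hx⟩ := Set.mem_iUnion.1 hx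
    obtain ⟨j, hy⟩ := Set.mem_iUnion.1 hy
    show M.b (σ x) (σ y) = M.b x y
    by_cases hij : i = j
    · subst hij
      exact hσ i x hx y hy
    · rw [horth i j hij _ (hσW i x hx) _ (hσW j y hy), horth i j hij x hx y hy]
  exact LinearMap.congr_fun₂ key x y

end Good

theorem orthogonal_group_product (V : BMod R) (hG : V.Good) (Λ : Type u)
    (rep : Λ → BMod R) (hrep : ∀ l m, (rep l).Isom (rep m) → l = m)
    (htyped : ∀ C ∈ V.comps, ∃ l, (V.restrict C).Isom (rep l))
    (Vl : Λ → Submodule R V.carrier)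
    (hVl : ∀ l, Vl l =
      span R (⋃₀ {C | C ∈ V.comps ∧ (V.restrict C).Isom (rep l)})) :
    (∀ σ : V.carrier ≃ₗ[R] V.carrier, (∀ x y, V.b (σ x) (σ y) = V.b x y) →
      ∀ l, (Vl l).map σ.toLinearMap = Vl l) ∧
    ∃ φ : V.orthGroup ≃* ((l : {l : Λ // Vl l ≠ ⊥}) → (V.restrictSub (Vl l.1)).orthGroup),
      ∀ (σ : V.orthGroup) (l : {l : Λ // Vl l ≠ ⊥}) (x : V.carrier) (hx : x ∈ Vl l.1),
        (((φ σ l : (V.restrictSub (Vl l.1)).carrier ≃ₗ[R] (V.restrictSub (Vl l.1)).carrier)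
          ⟨x, hx⟩ : V.carrier) = (σ : V.carrier ≃ₗ[R] V.carrier) x) := by
  -- `V.edge` unfolds to `baseEdge V.base L`, so `V.comps` are the components `baseComponent`
  let L (x y : V.carrier) : Prop := V.b x y ≠ 0
  let P (l : Λ) (C : Set V.carrier) : Prop := (V.restrict C).Isom (rep l)
  have hL : IsInvariantLineRel V.orthGroup L := by
    refine ⟨fun x y h => (hG.1 y x).trans_ne h, fun u u' x y h h' => h ?_,
      fun σ hσ x y h => (hσ x y).trans_ne h⟩
    rw [← hG.toBilin_apply, map_smul, map_smul, LinearMap.smul_apply, hG.toBilin_apply, h',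
      smul_zero, smul_zero]
  have hP : ∀ l, ∀ σ ∈ V.orthGroup, ∀ C C', (span R C).map σ.toLinearMap = span R C' →
      P l C → P l C' := fun l σ hσ C C' h hC => (isom_restrict_of_map hσ h).symm.trans hC
  have hPuniq : ∀ l m C, P l C → P m C → l = m := fun l m C hl hm => hrep l m (hl.symm.trans hm)
  have hB : IsUniqueBase R V.base := hG.2.2.2
  have hVl' (l : Λ) : Vl l = span R (baseOfType V.base L (P l)) :=
    (hVl l).trans (congrArg _ (sUnion_baseComponents_eq_baseOfType hL.symm _))
  have hmap : ∀ σ ∈ V.orthGroup, ∀ l, (Vl l).map σ.toLinearMap = Vl l := fun σ hσ l => by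
    rw [hVl']
    exact map_span_baseOfType hB hL (hP l) hσ
  refine ⟨fun σ hσ => hmap σ hσ, ?_⟩
  obtain ⟨t, ht⟩ := hB.1.exists_partition_baseOfType hPuniq fun x hx => htyped _ ⟨x, hx, rfl⟩
  have hW (l : Λ) : Vl l = span R (hB.1.basis '' (t ⁻¹' {l})) := by rw [hVl', ht]
  have hcov := hB.1.basis.iSup_eq_top_of_partition hW
  have horth (l m : Λ) (hlm : l ≠ m) : ∀ x ∈ Vl l, ∀ y ∈ Vl m, V.b x y = 0 := by
    rw [hVl', hVl']
    refine fun x hx y hy => hG.b_eq_zero_of_mem_span (fun e he f hf => not_not.1 ?_) hx hy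
    exact not_rel_of_mem_baseOfType hL.symm (fun C hl hm => hlm (hPuniq _ _ _ hl hm)) he hf
  obtain ⟨φ, hφ⟩ := exists_mulEquiv_pi_restrict V.orthGroup
    (fun l => (V.restrictSub (Vl l)).orthGroup) hcov hmap
    (fun σ hσ l τ hτ x y => (congrArg₂ V.b (hτ x) (hτ y)).trans (hσ x y)) fun τ => by
      obtain ⟨σ, hσ⟩ := hB.1.basis.exists_linearEquiv_restrict_eq hW fun l => (τ l).1
      refine ⟨σ, hG.b_map_eq hcov horth (fun l x hx => ?_) (fun l x hx y hy => ?_), hσ⟩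
      · exact hσ l ⟨x, hx⟩ ▸ ((τ l).1 ⟨x, hx⟩).2
      · rw [LinearEquiv.coe_toLinearMap, hσ l ⟨x, hx⟩, hσ l ⟨y, hy⟩]
        exact (τ l).2 ⟨x, hx⟩ ⟨y, hy⟩
  exact ⟨φ, fun σ l x hx => hφ σ l ⟨x, hx⟩⟩

end BMod

/-- For a quadratic (resp. bilinear) `R`-module `V` with unique base,
every isometry `σ ∈ O(V)` preserves each isotypical component `V_l`, and restriction
gives a group isomorphism `O(V) ≅ Π_{l ∈ Λ'} O(V_l)`. -/
theorem orthogonal_group_product (R : Type u) [CommSemiring R] :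
    (∀ V : QMod R, V.Good →
      ∀ (Λ : Type u) (rep : Λ → QMod R),
        (∀ l, (rep l).Good ∧ (rep l).Indecomp) →
        (∀ l m, (rep l).Isom (rep m) → l = m) →
        (∀ C ∈ V.comps, ∃ l, (V.restrict C).Isom (rep l)) →
        ∀ Vl : Λ → Submodule R V.carrier,
          (∀ l, Vl l =
            Submodule.span R (⋃₀ {C | C ∈ V.comps ∧ (V.restrict C).Isom (rep l)})) →
          (∀ σ : V.carrier ≃ₗ[R] V.carrier, (∀ x, V.q (σ x) = V.q x) →
            ∀ l, Submodule.map σ.toLinearMap (Vl l) = Vl l) ∧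
          ∃ φ : V.orthGroup ≃*
              ((l : {l : Λ // Vl l ≠ ⊥}) → (V.restrictSub (Vl l.1)).orthGroup),
            ∀ (σ : V.orthGroup) (l : {l : Λ // Vl l ≠ ⊥}) (x : V.carrier) (hx : x ∈ Vl l.1),
              (((φ σ l :
                  (V.restrictSub (Vl l.1)).carrier ≃ₗ[R] (V.restrictSub (Vl l.1)).carrier)
                    ⟨x, hx⟩ : V.carrier) =
                (σ : V.carrier ≃ₗ[R] V.carrier) x)) ∧
    (∀ V : BMod R, V.Good →
      ∀ (Λ : Type u) (rep : Λ → BMod R),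
        (∀ l, (rep l).Good ∧ (rep l).Indecomp) →
        (∀ l m, (rep l).Isom (rep m) → l = m) →
        (∀ C ∈ V.comps, ∃ l, (V.restrict C).Isom (rep l)) →
        ∀ Vl : Λ → Submodule R V.carrier,
          (∀ l, Vl l =
            Submodule.span R (⋃₀ {C | C ∈ V.comps ∧ (V.restrict C).Isom (rep l)})) →
          (∀ σ : V.carrier ≃ₗ[R] V.carrier, (∀ x y, V.b (σ x) (σ y) = V.b x y) →
            ∀ l, Submodule.map σ.toLinearMap (Vl l) = Vl l) ∧
          ∃ φ : V.orthGroup ≃*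
              ((l : {l : Λ // Vl l ≠ ⊥}) → (V.restrictSub (Vl l.1)).orthGroup),
            ∀ (σ : V.orthGroup) (l : {l : Λ // Vl l ≠ ⊥}) (x : V.carrier) (hx : x ∈ Vl l.1),
              (((φ σ l :
                  (V.restrictSub (Vl l.1)).carrier ≃ₗ[R] (V.restrictSub (Vl l.1)).carrier)
                    ⟨x, hx⟩ : V.carrier) =
                (σ : V.carrier ≃ₗ[R] V.carrier) x)) :=
  ⟨fun V hG Λ rep _ => V.orthogonal_group_product hG Λ rep,
    fun V hG Λ rep _ => V.orthogonal_group_product hG Λ rep⟩
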